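/- Let X be a real Hilbert space and ℓ ≤ d. Among all orthonormal families ψ_1,…,ψ_ℓ in X, the weighted projection error J(ψ_1,…,ψ_ℓ) = Σ_{j=0}^n α_j ‖y_j − Σ_{i=1}^ℓ ⟨y_j,ψ_i⟩_X ψ_i‖_X² is minimized by the eigenvectors of ℛψ = Σ_j α_j⟨ψ,y_j⟩_X y_j corresponding to its ℓ largest eigenvalues, and the minimal value equals Σ_{i=ℓ+1}^d λ_i. -/

import Mathlib

/-!
Write the error as total energy minus captured energy. Expanding one factor of
`⟪y j, v⟫²` in the eigenbasis shows that the energy captured by a direction `v` is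
`∑ k, λ k * ⟪ψ k, v⟫²`, so an orthonormal family `χ` captures `∑ k, λ k * t k` with
`t k = ∑ i, ⟪ψ k, χ i⟫²`. Bessel's inequality, used for `χ` and for `ψ`, gives `0 ≤ t k ≤ 1`
and `∑ k, t k ≤ ℓ`, and for decreasing nonnegative `λ` such a weighted sum is at most the sum of
the first `ℓ` eigenvalues; the eigenvectors `ψ 0, …, ψ (ℓ - 1)` attain it.
-/

open Finset

lemma sum_mul_le_sum_of_threshold {ι : Type*} [Fintype ι] [DecidableEq ι] (s : Finset ι)
    {lam t : ι → ℝ} {μ : ℝ} (hμ : 0 ≤ μ) (hs : ∀ k ∈ s, μ ≤ lam k)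
    (hsc : ∀ k ∉ s, lam k ≤ μ) (ht0 : ∀ k, 0 ≤ t k) (ht1 : ∀ k, t k ≤ 1)
    (hsum : ∑ k, t k ≤ #s) :
    ∑ k, lam k * t k ≤ ∑ k ∈ s, lam k := by
  have hin : ∑ k ∈ s, μ * (1 - t k) ≤ ∑ k ∈ s, lam k * (1 - t k) :=
    sum_le_sum fun k hk => mul_le_mul_of_nonneg_right (hs k hk) (sub_nonneg.2 (ht1 k))
  have hout : ∑ k ∈ sᶜ, lam k * t k ≤ ∑ k ∈ sᶜ, μ * t k :=
    sum_le_sum fun k hk => mul_le_mul_of_nonneg_right (hsc k (mem_compl.1 hk)) (ht0 k)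
  have hμt : μ * ∑ k, t k ≤ μ * #s := mul_le_mul_of_nonneg_left hsum hμ
  rw [← sum_add_sum_compl s] at hμt ⊢
  simp only [mul_sub, mul_one, sum_sub_distrib, sum_const, nsmul_eq_mul, ← mul_sum] at hin hout
  linarith [mul_add μ (∑ k ∈ s, t k) (∑ k ∈ sᶜ, t k)]

lemma Fin.mem_map_castLEEmb_univ {ℓ d : ℕ} (hℓ : ℓ ≤ d) (k : Fin d) :
    k ∈ univ.map (Fin.castLEEmb hℓ) ↔ (k : ℕ) < ℓ := by
  constructor
  · intro hk
    obtain ⟨i, -, rfl⟩ := mem_map.1 hk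
    exact i.isLt
  · exact fun hk => mem_map.2 ⟨⟨k, hk⟩, mem_univ _, rfl⟩

lemma Fin.sum_map_castLEEmb_univ {M : Type*} [AddCommMonoid M] {ℓ d : ℕ} (hℓ : ℓ ≤ d)
    (f : Fin d → M) :
    ∑ k ∈ univ.map (Fin.castLEEmb hℓ), f k = ∑ i : Fin ℓ, f (Fin.castLE hℓ i) :=
  sum_map _ _ _

lemma Fin.sum_castLE_add_sum_filter_le {M : Type*} [AddCommMonoid M] {ℓ d : ℕ} (hℓ : ℓ ≤ d)
    (f : Fin d → M) :
    ∑ i : Fin ℓ, f (Fin.castLE hℓ i) + ∑ k ∈ univ.filter (fun k : Fin d => ℓ ≤ (k : ℕ)), f k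
      = ∑ k, f k := by
  have hcompl : (univ.map (Fin.castLEEmb hℓ))ᶜ = univ.filter (fun k : Fin d => ℓ ≤ (k : ℕ)) := by
    ext k
    simp [Fin.mem_map_castLEEmb_univ hℓ]
  rw [← sum_add_sum_compl (univ.map (Fin.castLEEmb hℓ)), hcompl, Fin.sum_map_castLEEmb_univ]

lemma sum_mul_le_sum_castLE_of_antitone {ℓ d : ℕ} (hℓ : ℓ ≤ d) {lam t : Fin d → ℝ}
    (hmono : Antitone lam) (hpos : ∀ k, 0 ≤ lam k) (ht0 : ∀ k, 0 ≤ t k) (ht1 : ∀ k, t k ≤ 1)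
    (hsum : ∑ k, t k ≤ ℓ) :
    ∑ k, lam k * t k ≤ ∑ i : Fin ℓ, lam (Fin.castLE hℓ i) := by
  rw [← Fin.sum_map_castLEEmb_univ]
  have hmem := Fin.mem_map_castLEEmb_univ hℓ
  refine sum_mul_le_sum_of_threshold _ (μ := if h : ℓ < d then lam ⟨ℓ, h⟩ else 0) ?_ ?_ ?_ ht0 ht1
    (by simpa using hsum)
  · split_ifs <;> simp [hpos]
  · intro k hk
    split_ifs
    · exact hmono (Fin.le_def.2 ((hmem k).1 hk).le)
    · exact hpos k
  · intro k hk
    have hk : ℓ ≤ (k : ℕ) := not_lt.1 (mt (hmem k).2 hk)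
    rw [dif_pos (hk.trans_lt k.isLt)]
    exact hmono (Fin.le_def.2 hk)

section InnerProductSpace

variable {X : Type*} [NormedAddCommGroup X] [InnerProductSpace ℝ X]

lemma Orthonormal.norm_sub_sum_inner_smul_sq {ι : Type*} [Fintype ι] {χ : ι → X}
    (hχ : Orthonormal ℝ χ) (v : X) :
    ‖v - ∑ i, (inner ℝ v (χ i) : ℝ) • χ i‖ ^ 2 = ‖v‖ ^ 2 - ∑ i, (inner ℝ v (χ i) : ℝ) ^ 2 := by
  have hproj : (inner ℝ v (∑ i, (inner ℝ v (χ i) : ℝ) • χ i) : ℝ)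
      = ∑ i, (inner ℝ v (χ i) : ℝ) ^ 2 := by
    simp [inner_sum, real_inner_smul_right, sq]
  have hnorm : ‖∑ i, (inner ℝ v (χ i) : ℝ) • χ i‖ ^ 2 = ∑ i, (inner ℝ v (χ i) : ℝ) ^ 2 := by
    rw [← real_inner_self_eq_norm_sq, hχ.inner_sum]
    simp [sq]
  rw [norm_sub_sq_real, hproj, hnorm]
  ring

lemma Orthonormal.sum_inner_sq_le {ι : Type*} [Fintype ι] {χ : ι → X}
    (hχ : Orthonormal ℝ χ) (x : X) :
    ∑ i, (inner ℝ (χ i) x : ℝ) ^ 2 ≤ ‖x‖ ^ 2 := by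
  simpa only [Real.norm_eq_abs, sq_abs] using hχ.sum_inner_products_le (s := univ) (x := x)

lemma Orthonormal.inner_eq_sum_mul_of_mem_span {κ : Type*} [Fintype κ] {ψ : κ → X}
    (hψ : Orthonormal ℝ ψ) {x : X} (hx : x ∈ Submodule.span ℝ (Set.range ψ)) (w : X) :
    (inner ℝ x w : ℝ) = ∑ k, (inner ℝ x (ψ k) : ℝ) * inner ℝ (ψ k) w := by
  obtain ⟨c, rfl⟩ := (Submodule.mem_span_range_iff_exists_fun ℝ).1 hx
  simp [sum_inner, real_inner_smul_left, hψ.inner_left_fintype]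

variable {ι κ : Type*} [Fintype ι] [Fintype κ] {α : ι → ℝ} {y : ι → X}

lemma sum_mul_inner_sq_eq_of_eigen {ψ : X} {lam : ℝ} (hψ : ‖ψ‖ = 1)
    (heig : ∑ j, (α j * (inner ℝ ψ (y j) : ℝ)) • y j = lam • ψ) :
    ∑ j, α j * (inner ℝ (y j) ψ : ℝ) ^ 2 = lam :=
  calc ∑ j, α j * (inner ℝ (y j) ψ : ℝ) ^ 2
      = inner ℝ (∑ j, (α j * (inner ℝ ψ (y j) : ℝ)) • y j) ψ := by
        rw [sum_inner]
        refine sum_congr rfl fun j _ => ?_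
        rw [real_inner_smul_left, real_inner_comm ψ (y j)]
        ring
    _ = lam := by rw [heig, real_inner_smul_left, real_inner_self_eq_norm_sq, hψ]; ring

section Eigenbasis

variable {ψ : κ → X} {lam : κ → ℝ} (hψ : Orthonormal ℝ ψ)
  (hspan : ∀ j, y j ∈ Submodule.span ℝ (Set.range ψ))
  (heig : ∀ k, ∑ j, (α j * (inner ℝ (ψ k) (y j) : ℝ)) • y j = lam k • ψ k)
include hψ hspan heig

lemma sum_mul_inner_sq_eq_sum_eigenvalue_mul (v : X) :
    ∑ j, α j * (inner ℝ (y j) v : ℝ) ^ 2 = ∑ k, lam k * (inner ℝ (ψ k) v : ℝ) ^ 2 :=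
  calc ∑ j, α j * (inner ℝ (y j) v : ℝ) ^ 2
      = ∑ j, α j * (inner ℝ (y j) v : ℝ) * ∑ k, (inner ℝ (y j) (ψ k) : ℝ) * inner ℝ (ψ k) v := by
        refine sum_congr rfl fun j _ => ?_
        rw [← hψ.inner_eq_sum_mul_of_mem_span (hspan j), sq, mul_assoc]
    _ = ∑ k, (inner ℝ (ψ k) v : ℝ) *
          inner ℝ (∑ j, (α j * (inner ℝ (ψ k) (y j) : ℝ)) • y j) v := by
        simp only [mul_sum, sum_inner, real_inner_smul_left]
        rw [sum_comm]
        refine sum_congr rfl fun k _ => sum_congr rfl fun j _ => ?_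
        rw [real_inner_comm (ψ k) (y j)]
        ring
    _ = ∑ k, lam k * (inner ℝ (ψ k) v : ℝ) ^ 2 := by
        simp only [heig, real_inner_smul_left]
        exact sum_congr rfl fun k _ => by ring

lemma sum_mul_norm_sq_eq_sum_eigenvalues : ∑ j, α j * ‖y j‖ ^ 2 = ∑ k, lam k :=
  calc ∑ j, α j * ‖y j‖ ^ 2 = ∑ j, α j * ∑ k, (inner ℝ (y j) (ψ k) : ℝ) ^ 2 := by
        refine sum_congr rfl fun j _ => ?_
        rw [← real_inner_self_eq_norm_sq, hψ.inner_eq_sum_mul_of_mem_span (hspan j)]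
        simp only [real_inner_comm (ψ _) (y j), sq]
    _ = ∑ k, ∑ j, α j * (inner ℝ (y j) (ψ k) : ℝ) ^ 2 := by
        simp only [mul_sum]
        exact sum_comm
    _ = ∑ k, lam k :=
        sum_congr rfl fun k _ => sum_mul_inner_sq_eq_of_eigen (hψ.norm_eq_one k) (heig k)

lemma sum_mul_norm_sub_sum_inner_smul_sq {μ : Type*} [Fintype μ] {χ : μ → X}
    (hχ : Orthonormal ℝ χ) :
    ∑ j, α j * ‖y j - ∑ i, (inner ℝ (y j) (χ i) : ℝ) • χ i‖ ^ 2
      = ∑ k, lam k - ∑ i, ∑ j, α j * (inner ℝ (y j) (χ i) : ℝ) ^ 2 := by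
  simp only [hχ.norm_sub_sum_inner_smul_sq, mul_sub, mul_sum, sum_sub_distrib,
    sum_mul_norm_sq_eq_sum_eigenvalues hψ hspan heig]
  rw [sum_comm]

end Eigenbasis

lemma sum_sum_mul_inner_sq_le_sum_castLE {ℓ d : ℕ} (hℓ : ℓ ≤ d) {ψ : Fin d → X}
    {lam : Fin d → ℝ} (hψ : Orthonormal ℝ ψ)
    (hspan : ∀ j, y j ∈ Submodule.span ℝ (Set.range ψ))
    (heig : ∀ k, ∑ j, (α j * (inner ℝ (ψ k) (y j) : ℝ)) • y j = lam k • ψ k)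
    (hmono : Antitone lam) (hpos : ∀ k, 0 ≤ lam k) {χ : Fin ℓ → X} (hχ : Orthonormal ℝ χ) :
    ∑ i, ∑ j, α j * (inner ℝ (y j) (χ i) : ℝ) ^ 2 ≤ ∑ i : Fin ℓ, lam (Fin.castLE hℓ i) := by
  have ht1 : ∀ k, ∑ i, (inner ℝ (ψ k) (χ i) : ℝ) ^ 2 ≤ 1 := fun k => by
    simpa only [real_inner_comm (ψ k), hψ.norm_eq_one, one_pow] using hχ.sum_inner_sq_le (ψ k)
  have hsum : ∑ k, ∑ i, (inner ℝ (ψ k) (χ i) : ℝ) ^ 2 ≤ ℓ :=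
    calc ∑ k, ∑ i, (inner ℝ (ψ k) (χ i) : ℝ) ^ 2 = ∑ i, ∑ k, (inner ℝ (ψ k) (χ i) : ℝ) ^ 2 :=
          sum_comm
      _ ≤ ∑ _i : Fin ℓ, (1 : ℝ) := sum_le_sum fun i _ => by
          simpa only [hχ.norm_eq_one, one_pow] using hψ.sum_inner_sq_le (χ i)
      _ = ℓ := by simp
  calc ∑ i, ∑ j, α j * (inner ℝ (y j) (χ i) : ℝ) ^ 2
      = ∑ k, lam k * ∑ i, (inner ℝ (ψ k) (χ i) : ℝ) ^ 2 := by
        simp only [sum_mul_inner_sq_eq_sum_eigenvalue_mul hψ hspan heig, mul_sum]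
        exact sum_comm
    _ ≤ ∑ i : Fin ℓ, lam (Fin.castLE hℓ i) :=
        sum_mul_le_sum_castLE_of_antitone hℓ hmono hpos
          (fun k => sum_nonneg fun i _ => sq_nonneg _) ht1 hsum

end InnerProductSpace

theorem stmt9_general {X : Type*} [NormedAddCommGroup X] [InnerProductSpace ℝ X]
    (n d : ℕ) (y : Fin (n + 1) → X) (α : Fin (n + 1) → ℝ)
    (ψ : Fin d → X) (hON : Orthonormal ℝ ψ) (lam : Fin d → ℝ)
    (hpos : ∀ i, 0 < lam i) (hmono : Antitone lam)
    (heig : ∀ i, ∑ j, (α j * (inner ℝ (ψ i) (y j) : ℝ)) • y j = lam i • ψ i)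
    (hspan : ∀ j, y j ∈ Submodule.span ℝ (Set.range ψ))
    (ℓ : ℕ) (hℓ : ℓ ≤ d) :
    (∀ χ : Fin ℓ → X, Orthonormal ℝ χ →
      ∑ i ∈ Finset.univ.filter (fun i : Fin d => ℓ ≤ (i : ℕ)), lam i ≤
        ∑ j, α j * ‖y j - ∑ i, (inner ℝ (y j) (χ i) : ℝ) • χ i‖ ^ 2) ∧
    ∑ j, α j * ‖y j - ∑ i : Fin ℓ,
        (inner ℝ (y j) (ψ (Fin.castLE hℓ i)) : ℝ) • ψ (Fin.castLE hℓ i)‖ ^ 2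
      = ∑ i ∈ Finset.univ.filter (fun i : Fin d => ℓ ≤ (i : ℕ)), lam i := by
  have hsplit := Fin.sum_castLE_add_sum_filter_le hℓ lam
  refine ⟨fun χ hχ => ?_, ?_⟩
  · rw [sum_mul_norm_sub_sum_inner_smul_sq hON hspan heig hχ]
    linarith [sum_sum_mul_inner_sq_le_sum_castLE hℓ hON hspan heig hmono (fun k => (hpos k).le) hχ]
  · have hχ : Orthonormal ℝ fun i => ψ (Fin.castLE hℓ i) := hON.comp _ (Fin.castLE_injective hℓ)
    rw [sum_mul_norm_sub_sum_inner_smul_sq hON hspan heig hχ, ← hsplit]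
    simp only [fun k => sum_mul_inner_sq_eq_of_eigen (hON.norm_eq_one k) (heig k)]
    ring

theorem stmt9 {X : Type*} [NormedAddCommGroup X] [InnerProductSpace ℝ X] [CompleteSpace X]
    (n d : ℕ) (y : Fin (n + 1) → X) (α : Fin (n + 1) → ℝ) (hα : ∀ j, 0 < α j)
    (ψ : Fin d → X) (hON : Orthonormal ℝ ψ) (lam : Fin d → ℝ)
    (hpos : ∀ i, 0 < lam i) (hmono : Antitone lam)
    (heig : ∀ i, ∑ j, (α j * (inner ℝ (ψ i) (y j) : ℝ)) • y j = lam i • ψ i)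
    (hd : Module.finrank ℝ (Submodule.span ℝ (Set.range y)) = d)
    (hspan : ∀ j, y j ∈ Submodule.span ℝ (Set.range ψ))
    (ℓ : ℕ) (hℓ : ℓ ≤ d) :
    (∀ χ : Fin ℓ → X, Orthonormal ℝ χ →
      ∑ i ∈ Finset.univ.filter (fun i : Fin d => ℓ ≤ (i : ℕ)), lam i ≤
        ∑ j, α j * ‖y j - ∑ i, (inner ℝ (y j) (χ i) : ℝ) • χ i‖ ^ 2) ∧
    ∑ j, α j * ‖y j - ∑ i : Fin ℓ,
        (inner ℝ (y j) (ψ (Fin.castLE hℓ i)) : ℝ) • ψ (Fin.castLE hℓ i)‖ ^ 2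
      = ∑ i ∈ Finset.univ.filter (fun i : Fin d => ℓ ≤ (i : ℕ)), lam i :=
  stmt9_general n d y α ψ hON lam hpos hmono heig hspan ℓ hℓ
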